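/- arXiv:1904.09109 — 2 statements merged into one kernel-verified Lean document; each statement's English description precedes it below -/
import Mathlib

section
/- Let a ∈ ℝ^d with ‖a‖₂ = 1, let δ > 0, let b_1 < ⋯ < b_{k+1} be reals, let v_1, …, v_k ∈ ℝ^m, and let W ∈ ℝ^{k×m} have first row v_1ᵀ and i-th row (v_i - v_{i-1})ᵀ for 2 ≤ i ≤ k, with columns w_1, …, w_m ∈ ℝ^k. For c_s > 0 define the network g : ℝ^d → ℝ^m by g_j(x) = Σ_{l=1}^{k} W_{l,j} · ρ(c_s(aᵀx - b_l)). Then for every x ∈ ℝ^d with b_i + δ < aᵀx < b_{i+1} - δ for some i ∈ {1,…,k}, and every j ∈ {1,…,m}, one has |g_j(x) - (v_i)_j| ≤ ‖w_j‖₂ · √k · e^{-c_s δ}. -/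
/-!
On the `i`-th interval with margin `δ`, each neuron `ρ(c_s(aᵀx - b_l))` is within `e^{-c_s δ}`
of the step value `[l ≤ i]`, because `ρ(t) ≤ e^t` and `1 - ρ(t) = ρ(-t)`. Replacing every
neuron by its step value turns `g_j(x)` into the telescoping sum `Σ_{l ≤ i} W_{l,j} = (v_i)_j`,
and the error `Σ_l W_{l,j} · (ρ_l - [l ≤ i])` is bounded by Cauchy–Schwarz against the
constant vector.
-/

open RealInnerProductSpace

/-- The sigmoid function `ρ(t) = 1 / (1 + e^{-t})`. -/
noncomputable def sigmoid (t : ℝ) : ℝ := 1 / (1 + Real.exp (-t))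

open Finset

lemma sigmoid_nonneg (t : ℝ) : 0 ≤ sigmoid t := by
  unfold sigmoid; positivity

lemma sigmoid_le_exp (t : ℝ) : sigmoid t ≤ Real.exp t := by
  unfold sigmoid
  rw [div_le_iff₀ (by positivity), mul_add, ← Real.exp_add, add_neg_cancel, Real.exp_zero]
  linarith [Real.exp_pos t]

lemma one_sub_sigmoid (t : ℝ) : 1 - sigmoid t = sigmoid (-t) := by
  unfold sigmoid
  rw [neg_neg, Real.exp_neg]
  field_simp
  ring

lemma abs_sigmoid_mul_le {c δ s : ℝ} (hc : 0 ≤ c) (hs : s ≤ -δ) :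
    |sigmoid (c * s)| ≤ Real.exp (-(c * δ)) := by
  rw [abs_of_nonneg (sigmoid_nonneg _)]
  calc sigmoid (c * s) ≤ Real.exp (c * s) := sigmoid_le_exp _
    _ ≤ Real.exp (-(c * δ)) := Real.exp_le_exp.mpr (by nlinarith)

lemma abs_sigmoid_mul_sub_one_le {c δ s : ℝ} (hc : 0 ≤ c) (hs : δ ≤ s) :
    |sigmoid (c * s) - 1| ≤ Real.exp (-(c * δ)) := by
  rw [abs_sub_comm, one_sub_sigmoid, ← mul_neg]
  exact abs_sigmoid_mul_le hc (neg_le_neg hs)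

lemma Fin.sum_Iic_eq_of_eq_sub {M : Type*} [AddCommGroup M] {k : ℕ} (hk : 0 < k)
    (w v : Fin k → M) (h₀ : w ⟨0, hk⟩ = v ⟨0, hk⟩)
    (hsucc : ∀ i j : Fin k, (j : ℕ) = i + 1 → w j = v j - v i) (i : Fin k) :
    ∑ l ∈ Iic i, w l = v i := by
  obtain ⟨n, rfl⟩ : ∃ n, k = n + 1 := ⟨k - 1, by omega⟩
  induction i using Fin.induction with
  | zero =>
    have hIic : Iic (0 : Fin (n + 1)) = {0} := by ext l; simp
    simpa [hIic] using h₀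
  | succ i ih =>
    have hIic : Iic i.succ = insert i.succ (Iic i.castSucc) := by
      ext l
      simp only [mem_Iic, mem_insert, Fin.le_def, Fin.ext_iff, Fin.val_succ, Fin.val_castSucc]
      omega
    rw [hIic, sum_insert (by simp [Fin.le_def]), ih, hsucc i.castSucc i.succ rfl, sub_add_cancel]

lemma abs_sum_mul_le_sqrt_sum_sq_mul_sqrt_card {ι : Type*} (s : Finset ι) (f e : ι → ℝ)
    {E : ℝ} (hE : 0 ≤ E) (he : ∀ l ∈ s, |e l| ≤ E) :
    |∑ l ∈ s, f l * e l| ≤ √(∑ l ∈ s, f l ^ 2) * √(#s : ℝ) * E := by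
  have hcs := Real.sum_mul_le_sqrt_mul_sqrt s (fun l ↦ |f l|) (fun _ ↦ 1)
  simp only [sq_abs, one_pow, sum_const, nsmul_eq_mul, mul_one] at hcs
  calc |∑ l ∈ s, f l * e l| ≤ ∑ l ∈ s, |f l| * E := by
        refine (abs_sum_le_sum_abs _ _).trans (sum_le_sum fun l hl ↦ ?_)
        rw [abs_mul]
        exact mul_le_mul_of_nonneg_left (he l hl) (abs_nonneg _)
    _ ≤ √(∑ l ∈ s, f l ^ 2) * √(#s : ℝ) * E := by
        rw [← sum_mul]
        exact mul_le_mul_of_nonneg_right hcs hE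

section Margin

variable {k : ℕ} {b : Fin (k + 1) → ℝ} {δ t : ℝ} {i l : Fin k}

lemma le_sub_castSucc_of_le (hb : StrictMono b) (ht : b i.castSucc + δ < t) (hl : l ≤ i) :
    δ ≤ t - b l.castSucc := by
  have := hb.monotone (Fin.castSucc_le_castSucc_iff.mpr hl)
  linarith

lemma sub_castSucc_le_of_lt (hb : StrictMono b) (ht : t < b i.succ - δ) (hl : i < l) :
    t - b l.castSucc ≤ -δ := by
  have := hb.monotone (Fin.succ_le_castSucc_iff.mpr hl)
  linarith

lemma abs_sigmoid_sub_step_le (hb : StrictMono b) (ht₁ : b i.castSucc + δ < t)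
    (ht₂ : t < b i.succ - δ) {c : ℝ} (hc : 0 ≤ c) (l : Fin k) :
    |sigmoid (c * (t - b l.castSucc)) - if l ≤ i then 1 else 0| ≤ Real.exp (-(c * δ)) := by
  split_ifs with hl
  · exact abs_sigmoid_mul_sub_one_le hc (le_sub_castSucc_of_le hb ht₁ hl)
  · rw [sub_zero]
    exact abs_sigmoid_mul_le hc (sub_castSucc_le_of_lt hb ht₂ (not_le.mp hl))

end Margin

theorem network_output_deviation_bound_general {d k m : ℕ} (hk : 0 < k)
    (a : EuclideanSpace ℝ (Fin d))
    (δ : ℝ)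
    (b : Fin (k + 1) → ℝ) (hb : StrictMono b)
    (v : Fin k → Fin m → ℝ)
    (W : Matrix (Fin k) (Fin m) ℝ)
    (hW0 : W ⟨0, hk⟩ = v ⟨0, hk⟩)
    (hWs : ∀ i j : Fin k, (j : ℕ) = (i : ℕ) + 1 → W j = v j - v i)
    (cs : ℝ) (hcs : 0 < cs)
    (g : EuclideanSpace ℝ (Fin d) → Fin m → ℝ)
    (hg : ∀ x j, g x j = ∑ l : Fin k, W l j * sigmoid (cs * (⟪a, x⟫ - b l.castSucc)))
    (x : EuclideanSpace ℝ (Fin d)) (i : Fin k)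
    (hx₁ : b i.castSucc + δ < ⟪a, x⟫)
    (hx₂ : ⟪a, x⟫ < b i.succ - δ) :
    ∀ j : Fin m,
      |g x j - v i j| ≤
        Real.sqrt (∑ l : Fin k, (W l j) ^ 2) * Real.sqrt k * Real.exp (-(cs * δ)) := by
  intro j
  have hstep : ∑ l, W l j * (if l ≤ i then 1 else 0) = v i j := by
    have hrow : ∑ l ∈ Iic i, W l j = v i j := by
      rw [← Fin.sum_Iic_eq_of_eq_sub hk W v hW0 hWs i]
      exact (Finset.sum_apply _ _ _).symm
    simpa only [mul_ite, mul_one, mul_zero, sum_ite, sum_const_zero, add_zero, filter_ge_eq_Iic]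
  have hdiff : g x j - v i j =
      ∑ l, W l j * (sigmoid (cs * (⟪a, x⟫ - b l.castSucc)) - if l ≤ i then 1 else 0) := by
    simp only [hg, ← hstep, mul_sub, sum_sub_distrib]
  rw [hdiff]
  simpa using abs_sum_mul_le_sqrt_sum_sq_mul_sqrt_card univ (W · j) _ (Real.exp_nonneg _)
    fun l _ ↦ abs_sigmoid_sub_step_le hb hx₁ hx₂ hcs.le l

/-- For the 2-layer sigmoid network with difference-weight matrix `W`, if `x` projects
into the `i`-th interval with `δ`-margin, then each output coordinate deviates from
the target `v_i` by at most `‖w_j‖₂ √k e^{-c_s δ}`, where `w_j` is the `j`-th column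
of `W`. -/
theorem network_output_deviation_bound {d k m : ℕ} (hk : 0 < k)
    (a : EuclideanSpace ℝ (Fin d)) (ha : ‖a‖ = 1)
    (δ : ℝ) (hδ : 0 < δ)
    (b : Fin (k + 1) → ℝ) (hb : StrictMono b)
    (v : Fin k → Fin m → ℝ)
    (W : Matrix (Fin k) (Fin m) ℝ)
    (hW0 : W ⟨0, hk⟩ = v ⟨0, hk⟩)
    (hWs : ∀ i j : Fin k, (j : ℕ) = (i : ℕ) + 1 → W j = v j - v i)
    (cs : ℝ) (hcs : 0 < cs)
    (g : EuclideanSpace ℝ (Fin d) → Fin m → ℝ)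
    (hg : ∀ x j, g x j = ∑ l : Fin k, W l j * sigmoid (cs * (⟪a, x⟫ - b l.castSucc)))
    (x : EuclideanSpace ℝ (Fin d)) (i : Fin k)
    (hx₁ : b i.castSucc + δ < ⟪a, x⟫)
    (hx₂ : ⟪a, x⟫ < b i.succ - δ) :
    ∀ j : Fin m,
      |g x j - v i j| ≤
        Real.sqrt (∑ l : Fin k, (W l j) ^ 2) * Real.sqrt k * Real.exp (-(cs * δ)) :=
  network_output_deviation_bound_general hk a δ b hb v W hW0 hWs cs hcs g hg x i hx₁ hx₂
end

section
/- (Lemma 1) Let D be a probability distribution on ℝ^d × {1,…,c} that is (k_1,…,k_n)-separable with δ-margin, witnessed by unit projection vectors a_1, …, a_n ∈ ℝ^d and boundaries b_{s,1} < ⋯ < b_{s,k_s+1} for each s. Then there exist, for each s ∈ {1,…,n}, a scaling factor c^{(s)} > 0 and weights W^{(s)} ∈ ℝ^{k_s} defining the 2-layer scalar sigmoid network p^s(x) = Σ_{l=1}^{k_s} W^{(s)}_l · ρ(c^{(s)}(a_sᵀx - b_{s,l})), such that, writing p(x) = (p^1(x), …, p^n(x)) ∈ ℝ^n, the pushforward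 distribution D′ of (p(x), y) under (x,y) ∼ D is (∏_{s=1}^{n} k_s)-separable with (1/(4√n))-margin, witnessed by the projection vector a = (1/√n)(1, 1, …, 1) ∈ ℝ^n. -/
open RealInnerProductSpace MeasureTheory

/-!
On the `δ`-margin cells, the network `Σ_l w_s ρ((T/δ)(a_sᵀx - b_{s,l}))` differs from the staircase
`w_s (i_s + 1)`, where `i_s` is the interval of `a_sᵀx`, by at most `k_s w_s ρ(-T)`; choosing
`e^T ≥ 4 Σ_s k_s w_s` makes the total error of the coordinate sum of `p(x)` less than `1/4`.
With the mixed-radix place values `w_s = ∏_{j<s} k_j`, that sum is then within `1/4` of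
`Σ_s w_s + rank 𝐢`, where `rank 𝐢 = Σ_s i_s w_s` enumerates the cells bijectively
(`finPiFinEquiv`). Projecting on `a' = 𝟙/√n` divides by `√n`, so distinct cells land in disjoint
intervals of the line with margin `1/(4√n)`, and separability passes to the pushforward.
-/

open Finset Set Function

lemma sigmoid_eq_real_sigmoid : sigmoid = Real.sigmoid := funext fun _ => one_div _

lemma abs_sigmoid_sub_ite_le {T t : ℝ} {P : Prop} [Decidable P] (hpos : P → T ≤ t)
    (hneg : ¬P → t ≤ -T) : |Real.sigmoid t - if P then 1 else 0| ≤ Real.sigmoid (-T) := by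
  split_ifs with hP
  · rw [abs_sub_comm, abs_of_pos (sub_pos.2 (Real.sigmoid_lt_one t)), ← Real.sigmoid_neg]
    exact Real.sigmoid_le (by linarith [hpos hP])
  · rw [sub_zero, abs_of_pos (Real.sigmoid_pos t)]
    exact Real.sigmoid_le (hneg hP)

lemma abs_sum_sigmoid_sub_le {K : ℕ} {b : Fin (K + 1) → ℝ} (hb : Monotone b) {δ T u : ℝ}
    (hδ : 0 < δ) (hT : 0 ≤ T) {i : Fin K} (hlo : b i.castSucc + δ < u)
    (hhi : u < b i.succ - δ) :
    |∑ l : Fin K, Real.sigmoid (T / δ * (u - b l.castSucc)) - (i + 1 : ℕ)|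
      ≤ K * Real.sigmoid (-T) := by
  have hscale : ∀ v, δ ≤ v → T ≤ T / δ * v := fun v hv =>
    calc T = T / δ * δ := (div_mul_cancel₀ T hδ.ne').symm
      _ ≤ T / δ * v := by gcongr
  have hstep (l : Fin K) : |Real.sigmoid (T / δ * (u - b l.castSucc)) -
      if l ≤ i then 1 else 0| ≤ Real.sigmoid (-T) := by
    refine abs_sigmoid_sub_ite_le (fun hl => hscale _ ?_) (fun hl => ?_)
    · linarith [hb (Fin.castSucc_le_castSucc_iff.2 hl)]
    · have := hscale (b l.castSucc - u)
        (by linarith [hb (Fin.succ_le_castSucc_iff.2 (not_le.1 hl))])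
      linarith
  have hcount : ((i + 1 : ℕ) : ℝ) = ∑ l : Fin K, if l ≤ i then 1 else 0 := by
    rw [sum_boole, filter_ge_eq_Iic, Fin.card_Iic]
  calc _ = |∑ l : Fin K,
        (Real.sigmoid (T / δ * (u - b l.castSucc)) - if l ≤ i then 1 else 0)| := by
        rw [hcount, sum_sub_distrib]
    _ ≤ ∑ l : Fin K, |Real.sigmoid (T / δ * (u - b l.castSucc)) - if l ≤ i then 1 else 0| :=
        abs_sum_le_sum_abs _ _
    _ ≤ ∑ _l : Fin K, Real.sigmoid (-T) := sum_le_sum fun l _ => hstep l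
    _ = K * Real.sigmoid (-T) := by simp

lemma mul_sigmoid_neg_lt_quarter {N T : ℝ} (h : 4 * N ≤ Real.exp T) :
    N * Real.sigmoid (-T) < 1 / 4 := by
  rw [Real.sigmoid_def, neg_neg, ← div_eq_mul_inv, div_lt_iff₀ (by positivity)]
  linarith

lemma abs_sum_mul_sum_sigmoid_sub_lt {n : ℕ} {k : Fin n → ℕ}
    {b : ∀ s, Fin (k s + 1) → ℝ} (hb : ∀ s, Monotone (b s)) {w : Fin n → ℝ}
    (hw : ∀ s, 0 ≤ w s) {δ T : ℝ} (hδ : 0 < δ) (hT : 0 ≤ T)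
    (hTw : 4 * ∑ s, k s * w s ≤ Real.exp T) {I : ∀ s, Fin (k s)} {u : Fin n → ℝ}
    (hu : ∀ s, b s (I s).castSucc + δ < u s ∧ u s < b s (I s).succ - δ) :
    |∑ s, w s * ∑ l : Fin (k s), Real.sigmoid (T / δ * (u s - b s l.castSucc)) -
      ∑ s, w s * (I s + 1 : ℕ)| < 1 / 4 :=
  calc _ = |∑ s, w s *
        (∑ l : Fin (k s), Real.sigmoid (T / δ * (u s - b s l.castSucc)) - (I s + 1 : ℕ))| := by
        simp only [mul_sub, sum_sub_distrib]
    _ ≤ ∑ s, w s *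
        |∑ l : Fin (k s), Real.sigmoid (T / δ * (u s - b s l.castSucc)) - (I s + 1 : ℕ)| := by
        refine (abs_sum_le_sum_abs _ _).trans_eq (sum_congr rfl fun s _ => ?_)
        rw [abs_mul, abs_of_nonneg (hw s)]
    _ ≤ ∑ s, w s * (k s * Real.sigmoid (-T)) := by
        gcongr with s
        · exact hw s
        · exact abs_sum_sigmoid_sub_le (hb s) hδ hT (hu s).1 (hu s).2
    _ = (∑ s, k s * w s) * Real.sigmoid (-T) := by
        rw [sum_mul]
        exact sum_congr rfl fun s _ => by ring
    _ < 1 / 4 := mul_sigmoid_neg_lt_quarter hTw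

def mixedRadixWeight {n : ℕ} (k : Fin n → ℕ) (s : Fin n) : ℕ :=
  ∏ j, k (Fin.castLE s.is_lt.le j)

lemma finPiFinEquiv_add_sum_mixedRadixWeight {n : ℕ} {k : Fin n → ℕ} (I : ∀ s, Fin (k s)) :
    (finPiFinEquiv I : ℕ) + ∑ s, mixedRadixWeight k s =
      ∑ s, mixedRadixWeight k s * (I s + 1) := by
  rw [finPiFinEquiv_apply, ← sum_add_distrib]
  exact sum_congr rfl fun s _ => by rw [mixedRadixWeight]; ring

lemma abs_sum_mul_sum_sigmoid_sub_finPiFinEquiv_lt {n : ℕ} {k : Fin n → ℕ}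
    {b : ∀ s, Fin (k s + 1) → ℝ} (hb : ∀ s, Monotone (b s)) {δ T : ℝ} (hδ : 0 < δ)
    (hT : 0 ≤ T) (hTw : 4 * ∑ s, (k s * mixedRadixWeight k s : ℝ) ≤ Real.exp T)
    {I : ∀ s, Fin (k s)} {u : Fin n → ℝ}
    (hu : ∀ s, b s (I s).castSucc + δ < u s ∧ u s < b s (I s).succ - δ) :
    |∑ s, (mixedRadixWeight k s : ℝ) *
        ∑ l : Fin (k s), Real.sigmoid (T / δ * (u s - b s l.castSucc)) -
      ((finPiFinEquiv I : ℕ) + ∑ s, (mixedRadixWeight k s : ℝ))| < 1 / 4 := by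
  have hrank : ((finPiFinEquiv I : ℕ) + ∑ s, (mixedRadixWeight k s : ℝ)) =
      ∑ s, (mixedRadixWeight k s : ℝ) * (I s + 1 : ℕ) := by
    exact_mod_cast finPiFinEquiv_add_sum_mixedRadixWeight I
  rw [hrank]
  exact abs_sum_mul_sum_sigmoid_sub_lt hb (fun s => Nat.cast_nonneg _) hδ hT hTw hu

lemma EuclideanSpace.inner_eq_sum_div_of_apply_eq_one_div {n : ℕ}
    {a v : EuclideanSpace ℝ (Fin n)} {r : ℝ} (ha : ∀ s, a s = 1 / r) :
    ⟪a, v⟫ = (∑ s, v s) / r := by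
  simp [PiLp.inner_apply, ha, div_eq_mul_inv, sum_mul]

lemma div_mem_Ioo_of_abs_sub_lt_quarter {K : ℕ} {r C u : ℝ} (hr : 0 < r) {j : Fin K}
    (h : |u - (j + C)| < 1 / 4) :
    u / r ∈ Ioo ((C + (j.castSucc : ℕ) - 1 / 2) / r + 1 / (4 * r))
      ((C + (j.succ : ℕ) - 1 / 2) / r - 1 / (4 * r)) := by
  have hquarter : 1 / (4 * r) = (1 / 4) / r := by ring
  rw [Set.mem_Ioo, hquarter, ← add_div, ← sub_div, div_lt_div_iff_of_pos_right hr,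
    div_lt_div_iff_of_pos_right hr]
  simp only [Fin.val_castSucc, Fin.val_succ, Nat.cast_add, Nat.cast_one]
  constructor <;> linarith [abs_lt.1 h]

lemma Fin.pairwise_disjoint_Ioo_add_sub {K : ℕ} {β : Fin (K + 1) → ℝ} (hβ : Monotone β)
    {m : ℝ} (hm : 0 ≤ m) :
    Pairwise (Disjoint on fun j : Fin K => Ioo (β j.castSucc + m) (β j.succ - m)) := by
  refine (pairwise_disjoint_on _).2 fun i j hij => disjoint_left.2 fun x hi hj => ?_
  linarith [hi.2, hj.1, hβ (Fin.succ_le_castSucc_iff.2 hij)]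

section Pushforward

variable {α γ L ι κ : Type*} [MeasurableSpace α] [MeasurableSpace L]

/-- Conditions (i) and (ii) of separability, for given cells `X_𝐢` and labels `y_𝐢`. -/
def SeparableBy (ν : Measure (α × L)) (X : ι → Set α) (y : ι → L) : Prop :=
  (∀ I, ν {p | p.1 ∈ X I ∧ p.2 = y I} = ν {p | p.1 ∈ X I}) ∧ ν {p | ∃ I, p.1 ∈ X I} = 1

variable {μ : Measure (α × L)} [IsProbabilityMeasure μ] {X : ι → Set α} {Y : κ → Set γ}
  {F : α → γ}

lemma ae_mem_preimage_iff_of_mapsTo [Countable ι] (hXm : ∀ I, MeasurableSet (X I)) (e : ι ≃ κ)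
    (hF : ∀ I, MapsTo F (X I) (Y (e I))) (hY : Pairwise (Disjoint on Y))
    (hcover : μ {p | ∃ I, p.1 ∈ X I} = 1) (j : κ) :
    ∀ᵐ p ∂μ, F p.1 ∈ Y j ↔ p.1 ∈ X (e.symm j) := by
  have hG : Measurable fun p : α × L => ∃ I, p.1 ∈ X I :=
    .exists fun I => (measurable_fst (hXm I)).mem
  filter_upwards [(ae_iff_prob_eq_one hG).2 hcover] with p ⟨I, hI⟩
  refine ⟨fun hj => ?_, fun hj => e.apply_symm_apply j ▸ hF _ hj⟩
  obtain rfl : j = e I := by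
    by_contra hne
    exact disjoint_left.1 (hY hne) hj (hF I hI)
  simpa using hI

theorem SeparableBy.map_of_mapsTo [MeasurableSpace γ] [MeasurableSingletonClass L]
    [Countable ι] {y : ι → L} (h : SeparableBy μ X y) (hXm : ∀ I, MeasurableSet (X I))
    (hYm : ∀ j, MeasurableSet (Y j)) (hFm : Measurable F) (e : ι ≃ κ)
    (hF : ∀ I, MapsTo F (X I) (Y (e I))) (hY : Pairwise (Disjoint on Y)) :
    SeparableBy (μ.map fun p => (F p.1, p.2)) Y (y ∘ e.symm) := by
  obtain ⟨hcond, hcover⟩ := h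
  have hmap : Measurable fun p : α × L => (F p.1, p.2) :=
    (hFm.comp measurable_fst).prodMk measurable_snd
  refine ⟨fun j => ?_, ?_⟩
  · have h := ae_mem_preimage_iff_of_mapsTo hXm e hF hY hcover j
    rw [comp_apply, Measure.map_apply hmap (s := {q | q.1 ∈ Y j}) (measurable_fst (hYm j)),
      Measure.map_apply hmap (s := {q | q.1 ∈ Y j ∧ q.2 = y (e.symm j)})
        ((measurable_fst (hYm j)).inter (measurable_snd (measurableSet_singleton _)))]
    refine (measure_congr ?_).trans ((hcond (e.symm j)).trans (measure_congr ?_)) <;>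
      refine Filter.eventuallyEq_set.2 (h.mono fun p hp => ?_)
    exacts [and_congr_left' hp, hp.symm]
  · have := Measure.isProbabilityMeasure_map (μ := μ) hmap.aemeasurable
    refine le_antisymm prob_le_one ?_
    calc 1 = μ {p | ∃ I, p.1 ∈ X I} := hcover.symm
      _ ≤ μ ((fun p => (F p.1, p.2)) ⁻¹' {q | ∃ j, q.1 ∈ Y j}) :=
          measure_mono fun p ⟨I, hI⟩ => ⟨e I, hF I hI⟩
      _ ≤ _ := Measure.le_map_apply hmap.aemeasurable _

end Pushforward

theorem map_to_one_dim_separable_general {d c n : ℕ} (hn : 1 ≤ n)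
    (k : Fin n → ℕ)
    (μ : Measure (EuclideanSpace ℝ (Fin d) × Fin c)) [IsProbabilityMeasure μ]
    (δ : ℝ) (hδ : 0 < δ)
    (a : Fin n → EuclideanSpace ℝ (Fin d))
    (b : ∀ s : Fin n, Fin (k s + 1) → ℝ) (hb : ∀ s, StrictMono (b s))
    (y : (∀ s : Fin n, Fin (k s)) → Fin c)
    (hcond : ∀ I : ∀ s : Fin n, Fin (k s),
      μ {p | (∀ s, b s (I s).castSucc + δ < ⟪a s, p.1⟫ ∧ ⟪a s, p.1⟫ < b s (I s).succ - δ)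
              ∧ p.2 = y I}
        = μ {p | ∀ s, b s (I s).castSucc + δ < ⟪a s, p.1⟫ ∧ ⟪a s, p.1⟫ < b s (I s).succ - δ})
    (hcover : μ {p | ∃ I : ∀ s : Fin n, Fin (k s),
      ∀ s, b s (I s).castSucc + δ < ⟪a s, p.1⟫ ∧ ⟪a s, p.1⟫ < b s (I s).succ - δ} = 1) :
    ∃ (cS : Fin n → ℝ) (W : ∀ s : Fin n, Fin (k s) → ℝ),
      (∀ s, 0 < cS s) ∧
      ∀ (p : EuclideanSpace ℝ (Fin d) → EuclideanSpace ℝ (Fin n)),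
        (∀ x s, p x s = ∑ l : Fin (k s),
          W s l * sigmoid (cS s * (⟪a s, x⟫ - b s l.castSucc))) →
      ∀ (a' : EuclideanSpace ℝ (Fin n)), (∀ s, a' s = 1 / Real.sqrt n) →
      ∃ (β : Fin ((∏ s : Fin n, k s) + 1) → ℝ)
        (y' : Fin (∏ s : Fin n, k s) → Fin c),
        StrictMono β ∧
        (∀ i : Fin (∏ s : Fin n, k s),
          Measure.map (fun q : EuclideanSpace ℝ (Fin d) × Fin c => (p q.1, q.2)) μ
            {q : EuclideanSpace ℝ (Fin n) × Fin c |
              (β i.castSucc + 1 / (4 * Real.sqrt n) < ⟪a', q.1⟫ ∧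
                ⟪a', q.1⟫ < β i.succ - 1 / (4 * Real.sqrt n)) ∧ q.2 = y' i}
          = Measure.map (fun q : EuclideanSpace ℝ (Fin d) × Fin c => (p q.1, q.2)) μ
            {q : EuclideanSpace ℝ (Fin n) × Fin c |
              β i.castSucc + 1 / (4 * Real.sqrt n) < ⟪a', q.1⟫ ∧
                ⟪a', q.1⟫ < β i.succ - 1 / (4 * Real.sqrt n)}) ∧
        Measure.map (fun q : EuclideanSpace ℝ (Fin d) × Fin c => (p q.1, q.2)) μ
          {q : EuclideanSpace ℝ (Fin n) × Fin c |
            ∃ i : Fin (∏ s : Fin n, k s),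
              β i.castSucc + 1 / (4 * Real.sqrt n) < ⟪a', q.1⟫ ∧
                ⟪a', q.1⟫ < β i.succ - 1 / (4 * Real.sqrt n)} = 1 := by
  set T : ℝ := 4 * ∑ s, (k s * mixedRadixWeight k s : ℝ) + 1
  have hT : 0 < T := by positivity
  refine ⟨fun _ => T / δ, fun s _ => mixedRadixWeight k s, fun _ => div_pos hT hδ,
    fun p hp a' ha' => ?_⟩
  simp only [sigmoid_eq_real_sigmoid, ← mul_sum] at hp
  have hsqrt : 0 < √(n : ℝ) := Real.sqrt_pos.2 (by exact_mod_cast hn)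
  set β : Fin ((∏ s, k s) + 1) → ℝ :=
    fun i => (∑ s, (mixedRadixWeight k s : ℝ) + i - 1 / 2) / √n
  have hβ : StrictMono β := fun i j hij => div_lt_div_of_pos_right (by simpa using hij) hsqrt
  have hmaps : ∀ I, MapsTo p
      {x | ∀ s, b s (I s).castSucc + δ < ⟪a s, x⟫ ∧ ⟪a s, x⟫ < b s (I s).succ - δ}
      ((⟪a', ·⟫) ⁻¹' Ioo (β (finPiFinEquiv I).castSucc + 1 / (4 * √n))
        (β (finPiFinEquiv I).succ - 1 / (4 * √n))) := fun I x hx => by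
    rw [Set.mem_preimage, EuclideanSpace.inner_eq_sum_div_of_apply_eq_one_div ha']
    refine div_mem_Ioo_of_abs_sub_lt_quarter hsqrt ?_
    simpa only [hp] using abs_sum_mul_sum_sigmoid_sub_finPiFinEquiv_lt
      (fun s => (hb s).monotone) hδ hT.le (by linarith [Real.add_one_le_exp T]) hx
  have hpm : Measurable p := (WithLp.measurable_toLp 2 _).comp
    (measurable_pi_lambda _ fun s => by simp only [hp]; fun_prop)
  obtain ⟨hlabel, hfull⟩ := SeparableBy.map_of_mapsTo (μ := μ) (y := y) (F := p)
    (X := fun I : ∀ s, Fin (k s) =>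
      {x | ∀ s, b s (I s).castSucc + δ < ⟪a s, x⟫ ∧ ⟪a s, x⟫ < b s (I s).succ - δ})
    (Y := fun j => (⟪a', ·⟫) ⁻¹' Ioo (β j.castSucc + 1 / (4 * √n)) (β j.succ - 1 / (4 * √n)))
    ⟨hcond, hcover⟩ (fun I => by measurability)
    (fun j => (by fun_prop : Measurable (⟪a', ·⟫)) measurableSet_Ioo) hpm finPiFinEquiv
    (by exact hmaps) (by
      exact (Fin.pairwise_disjoint_Ioo_add_sub hβ.monotone (by positivity)).mono
        fun _ _ h => h.preimage _)
  exact ⟨β, y ∘ finPiFinEquiv.symm, hβ, hlabel, hfull⟩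

/-- **Lemma 1.** If the distribution `μ` on `ℝ^d × {1,…,c}` is `(k_1,…,k_n)`-separable
with `δ`-margin (witnessed by unit vectors `a_1,…,a_n`, boundaries
`b_{s,1} < ⋯ < b_{s,k_s+1}` and labels `y_𝐢`), then one can choose, for each `s`, a
scaling factor `c^{(s)} > 0` and weights `W^{(s)} ∈ ℝ^{k_s}` such that, with
`p^s(x) = Σ_l W^{(s)}_l ρ(c^{(s)}(a_sᵀx - b_{s,l}))` and `p(x) = (p^1(x),…,p^n(x))`,
the pushforward of `μ` under `(x,y) ↦ (p(x),y)` is `(∏_s k_s)`-separable with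
`1/(4√n)`-margin, witnessed by the projection vector `a' = (1/√n)(1,…,1) ∈ ℝ^n`
(together with some boundaries `β_1 < ⋯ < β_{K+1}` and labels `y'_i`). -/
theorem map_to_one_dim_separable {d c n : ℕ} (hn : 1 ≤ n)
    (k : Fin n → ℕ) (hk : ∀ s, 0 < k s)
    (μ : Measure (EuclideanSpace ℝ (Fin d) × Fin c)) [IsProbabilityMeasure μ]
    (δ : ℝ) (hδ : 0 < δ)
    (a : Fin n → EuclideanSpace ℝ (Fin d)) (ha : ∀ s, ‖a s‖ = 1)
    (b : ∀ s : Fin n, Fin (k s + 1) → ℝ) (hb : ∀ s, StrictMono (b s))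
    (y : (∀ s : Fin n, Fin (k s)) → Fin c)
    (hcond : ∀ I : ∀ s : Fin n, Fin (k s),
      μ {p | (∀ s, b s (I s).castSucc + δ < ⟪a s, p.1⟫ ∧ ⟪a s, p.1⟫ < b s (I s).succ - δ)
              ∧ p.2 = y I}
        = μ {p | ∀ s, b s (I s).castSucc + δ < ⟪a s, p.1⟫ ∧ ⟪a s, p.1⟫ < b s (I s).succ - δ})
    (hcover : μ {p | ∃ I : ∀ s : Fin n, Fin (k s),
      ∀ s, b s (I s).castSucc + δ < ⟪a s, p.1⟫ ∧ ⟪a s, p.1⟫ < b s (I s).succ - δ} = 1) :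
    ∃ (cS : Fin n → ℝ) (W : ∀ s : Fin n, Fin (k s) → ℝ),
      (∀ s, 0 < cS s) ∧
      ∀ (p : EuclideanSpace ℝ (Fin d) → EuclideanSpace ℝ (Fin n)),
        (∀ x s, p x s = ∑ l : Fin (k s),
          W s l * sigmoid (cS s * (⟪a s, x⟫ - b s l.castSucc))) →
      ∀ (a' : EuclideanSpace ℝ (Fin n)), (∀ s, a' s = 1 / Real.sqrt n) →
      ∃ (β : Fin ((∏ s : Fin n, k s) + 1) → ℝ)
        (y' : Fin (∏ s : Fin n, k s) → Fin c),
        StrictMono β ∧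
        (∀ i : Fin (∏ s : Fin n, k s),
          Measure.map (fun q : EuclideanSpace ℝ (Fin d) × Fin c => (p q.1, q.2)) μ
            {q : EuclideanSpace ℝ (Fin n) × Fin c |
              (β i.castSucc + 1 / (4 * Real.sqrt n) < ⟪a', q.1⟫ ∧
                ⟪a', q.1⟫ < β i.succ - 1 / (4 * Real.sqrt n)) ∧ q.2 = y' i}
          = Measure.map (fun q : EuclideanSpace ℝ (Fin d) × Fin c => (p q.1, q.2)) μ
            {q : EuclideanSpace ℝ (Fin n) × Fin c |
              β i.castSucc + 1 / (4 * Real.sqrt n) < ⟪a', q.1⟫ ∧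
                ⟪a', q.1⟫ < β i.succ - 1 / (4 * Real.sqrt n)}) ∧
        Measure.map (fun q : EuclideanSpace ℝ (Fin d) × Fin c => (p q.1, q.2)) μ
          {q : EuclideanSpace ℝ (Fin n) × Fin c |
            ∃ i : Fin (∏ s : Fin n, k s),
              β i.castSucc + 1 / (4 * Real.sqrt n) < ⟪a', q.1⟫ ∧
                ⟪a', q.1⟫ < β i.succ - 1 / (4 * Real.sqrt n)} = 1 :=
  map_to_one_dim_separable_general hn k μ δ hδ a b hb y hcond hcover
end
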